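/- Let n, k ∈ ℕ. If X = Y_0 ∪ Y_1 ⊆ ℕ is a finite set which is ω^n·(4k)-large and exp-sparse, then Y_0 is ω^n·k-large or Y_1 is ω^n·k-large. -/

import Mathlib

/- Ordinals `α < ω^ω` are represented in Cantor normal form as the list of their
exponents in nonincreasing order: `[n₀, n₁, …, n_{k-1}]` codes `ω^{n₀} + ⋯ + ω^{n_{k-1}}`,
and such a list is a valid Cantor normal form when it is sorted w.r.t. `≥`. -/

/-- The Ketonen–Solovay operation `α[m]`: `0[m] = 0`; `α[m] = β` if `α = β + 1`;
`α[m] = β + ω^(n-1)·m` if `α = β + ω^n` with `n ≥ 1`. -/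
def KSstep : List ℕ → ℕ → List ℕ
  | [], _ => []
  | [0], _ => []
  | [Nat.succ n], m => List.replicate m n
  | a :: b :: l, m => a :: KSstep (b :: l) m

/-- A finite set `X = {x₀ < ⋯ < x_{ℓ-1}} ⊆ ℕ` is `α`-large if `α[x₀][x₁]⋯[x_{ℓ-1}| = 0`. -/
def IsLarge (α : List ℕ) (X : Finset ℕ) : Prop :=
  (X.sort (· ≤ ·)).foldl KSstep α = []

/-- A finite set `X ⊆ ℕ` (with `min X ≥ 3`) is exp-sparse if for all `x, y ∈ X`,
`x < y` implies `4^x < y`. -/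
def ExpSparse (X : Finset ℕ) : Prop :=
  (∀ x ∈ X, 3 ≤ x) ∧ ∀ x ∈ X, ∀ y ∈ X, x < y → 4 ^ x < y

/-- A finite set `X ⊆ ℕ` is `α`-sparse if for all `x, y ∈ X` with `x < y`,
the interval `(x, y]` is `α`-large. -/
def SparseFor (α : List ℕ) (X : Finset ℕ) : Prop :=
  ∀ x ∈ X, ∀ y ∈ X, x < y → IsLarge α (Finset.Ioc x y)

/- The proof is by induction on `n`, through the case `k = 1` in the weaker form: an
exp-sparse `ω^n·2`-large set has an `ω^n`-large colour class.

Given that case at level `n`, an `ω^n·2j`-large set splits into `j` consecutive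
`ω^n·2`-large blocks, each of which contributes one `ω^n` to one of the two colour classes, so
the classes are `ω^n·a`- and `ω^n·b`-large with `a + b = j`; for `j = 2k` one of `a, b` is at
least `k`.

For the case `ω^{n+1}·2` at level `n + 1`, write the set as `{x₀} ∪ P ∪ {x₁} ∪ S` with `P`
`ω^n·x₀`-large and `S` `ω^n·x₁`-large. Then `P ∪ S` is `ω^n·4m`-large for `m = ⌊x₁/4⌋`, and
exp-sparseness gives `x < m` for all `x ∈ {x₀} ∪ P`. The induction hypothesis yields a colour
`d` whose class in `P ∪ S` is `ω^n·m`-large. If `{x₀} ∪ P` meets the colour `d`, its least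
element `y` of that colour followed by the rest of the class is `ω^{n+1}`-large, as `y < m`;
otherwise `{x₀} ∪ P` lies in the other class.

All of this rests on monotonicity (a superset of an `α`-large set is `α`-large), which comes
from the Ketonen–Solovay observation that for `m ≤ z`, `α[m][z]` is reached from `α[z]` by
steps `·[m']` with `m' ≤ z`. -/

open List

theorem KSstep_cons (a : ℕ) {t : List ℕ} (ht : t ≠ []) (m : ℕ) :
    KSstep (a :: t) m = a :: KSstep t m := by
  obtain ⟨b, l, rfl⟩ := exists_cons_of_ne_nil ht
  simp only [KSstep]

theorem KSstep_append (γ : List ℕ) {δ : List ℕ} (hδ : δ ≠ []) (m : ℕ) :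
    KSstep (γ ++ δ) m = γ ++ KSstep δ m := by
  induction γ with
  | nil => rfl
  | cons a γ ih => rw [cons_append, KSstep_cons a (by simp [hδ]), ih, cons_append]

theorem KSstep_replicate_succ (j e m : ℕ) :
    KSstep (replicate (j + 1) e) m = replicate j e ++ KSstep [e] m := by
  rw [replicate_succ', KSstep_append _ (cons_ne_nil e [])]

theorem KSstep_singleton_succ (n m : ℕ) : KSstep [n + 1] m = replicate m n := rfl

theorem KSstep_singleton_zero_right (e : ℕ) : KSstep [e] 0 = [] := by
  cases e <;> rfl

def KSReach (z : ℕ) : List ℕ → List ℕ → Prop :=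
  Relation.ReflTransGen fun α β => ∃ m ≤ z, β = KSstep α m

namespace KSReach

variable {z : ℕ}

theorem single_KSstep {m : ℕ} (hm : m ≤ z) (α : List ℕ) : KSReach z α (KSstep α m) :=
  .single ⟨m, hm, rfl⟩

theorem eq_nil_of_nil {β : List ℕ} (h : KSReach z [] β) : β = [] := by
  induction h with
  | refl => rfl
  | tail _ hstep ih =>
    obtain ⟨m, -, rfl⟩ := hstep
    rw [ih]
    rfl

theorem append_left (γ : List ℕ) {t t' : List ℕ} (h : KSReach z t t') :
    KSReach z (γ ++ t) (γ ++ t') := by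
  induction h with
  | refl => exact .refl
  | @tail b _ _ hstep ih =>
    obtain ⟨m, hm, rfl⟩ := hstep
    rcases eq_or_ne b [] with rfl | hb
    · exact ih
    · exact ih.tail ⟨m, hm, (KSstep_append γ hb m).symm⟩

theorem cons (a : ℕ) {t t' : List ℕ} (h : KSReach z t t') : KSReach z (a :: t) (a :: t') :=
  h.append_left [a]

end KSReach

-- `α[0]` drops the last term of `α`.
theorem ksReach_nil (z : ℕ) : ∀ α : List ℕ, KSReach z α []
  | [] => .refl
  | [a] => .single ⟨0, Nat.zero_le z, (KSstep_singleton_zero_right a).symm⟩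
  | a :: b :: l => ((ksReach_nil z (b :: l)).cons a).trans
      (.single ⟨0, Nat.zero_le z, (KSstep_singleton_zero_right a).symm⟩)

theorem ksReach_replicate_of_le (z e : ℕ) {p q : ℕ} (h : q ≤ p) :
    KSReach z (replicate p e) (replicate q e) := by
  have hsplit : replicate p e = replicate q e ++ replicate (p - q) e := by
    rw [← replicate_add, Nat.add_sub_cancel' h]
  rw [hsplit]
  simpa only [append_nil] using (ksReach_nil z _).append_left (replicate q e)

theorem ksReach_KSstep_KSstep : ∀ (γ : List ℕ) {m z : ℕ}, m ≤ z →
    KSReach z (KSstep γ z) (KSstep (KSstep γ m) z)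
  | [], _, _, _ => .refl
  | [0], _, _, _ => .refl
  | [e + 1], _, z, hmz => (ksReach_replicate_of_le z e hmz).tail ⟨z, le_rfl, rfl⟩
  | a :: b :: l, m, z, hmz => by
    rw [KSstep_cons a (cons_ne_nil b l), KSstep_cons a (cons_ne_nil b l)]
    rcases eq_or_ne (KSstep (b :: l) m) [] with ht | ht
    · rw [ht]
      exact ((ksReach_nil z _).cons a).tail ⟨z, le_rfl, rfl⟩
    · rw [KSstep_cons a ht]
      exact (ksReach_KSstep_KSstep (b :: l) hmz).cons a

theorem KSReach.KSstep_of_le {y z : ℕ} {γ δ : List ℕ} (h : KSReach y γ δ) (hyz : y ≤ z) :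
    KSReach z (KSstep γ z) (KSstep δ z) := by
  induction h with
  | refl => exact .refl
  | tail _ hstep ih =>
    obtain ⟨m, hm, rfl⟩ := hstep
    exact ih.trans (ksReach_KSstep_KSstep _ (hm.trans hyz))

/-- `IsLarge α X` is `IsLargeList α (X.sort (· ≤ ·))`; here the elements are used in the order
of `l`, which need not be increasing. -/
def IsLargeList (α l : List ℕ) : Prop :=
  l.foldl KSstep α = []

theorem isLargeList_cons {α : List ℕ} {x : ℕ} {l : List ℕ} :
    IsLargeList α (x :: l) ↔ IsLargeList (KSstep α x) l :=
  Iff.rfl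

theorem isLargeList_nil_left (l : List ℕ) : IsLargeList [] l := by
  induction l with
  | nil => rfl
  | cons x l ih => exact ih

namespace IsLargeList

variable {α γ δ : List ℕ}

theorem ne_nil {l : List ℕ} (h : IsLargeList α l) (hα : α ≠ []) : l ≠ [] := by
  rintro rfl
  exact hα h

theorem of_ksReach {y : ℕ} {l : List ℕ} (h : IsLargeList γ l) (hγδ : KSReach y γ δ)
    (hy : ∀ a ∈ l, y ≤ a) (hl : l.Pairwise (· ≤ ·)) : IsLargeList δ l := by
  induction l generalizing γ δ y with
  | nil =>
    obtain rfl : γ = [] := h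
    exact hγδ.eq_nil_of_nil
  | cons x l ih =>
    exact ih h (hγδ.KSstep_of_le (hy x mem_cons_self)) (fun a ha => rel_of_pairwise_cons hl ha)
      hl.of_cons

theorem mono {l₁ l₂ : List ℕ} (h : IsLargeList α l₁) (hsub : l₁ <+ l₂)
    (hl : l₂.Pairwise (· ≤ ·)) : IsLargeList α l₂ := by
  induction hsub generalizing α with
  | slnil => exact h
  | cons y _ ih =>
    exact (ih h hl.of_cons).of_ksReach (KSReach.single_KSstep le_rfl α)
      (fun a ha => rel_of_pairwise_cons hl ha) hl.of_cons
  | cons_cons y _ ih => exact ih h hl.of_cons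

theorem exists_append_of_append {l : List ℕ} (h : IsLargeList (γ ++ δ) l) :
    ∃ p s, l = p ++ s ∧ IsLargeList δ p ∧ IsLargeList γ s := by
  induction l generalizing δ with
  | nil =>
    obtain ⟨rfl, rfl⟩ := append_eq_nil_iff.mp h
    exact ⟨[], [], rfl, rfl, rfl⟩
  | cons x l ih =>
    rcases eq_or_ne δ [] with rfl | hδ
    · exact ⟨[], x :: l, rfl, rfl, by simpa using h⟩
    · rw [isLargeList_cons, KSstep_append γ hδ x] at h
      obtain ⟨p, s, rfl, hp, hs⟩ := ih h
      exact ⟨x :: p, s, rfl, hp, hs⟩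

theorem append {p s : List ℕ} (hp : IsLargeList δ p) (hs : IsLargeList γ s)
    (hps : (p ++ s).Pairwise (· ≤ ·)) : IsLargeList (γ ++ δ) (p ++ s) := by
  induction p generalizing δ with
  | nil => simpa [show δ = [] from hp] using hs
  | cons x p ih =>
    rcases eq_or_ne δ [] with rfl | hδ
    · simpa using hs.mono (sublist_append_right _ s) hps
    · rw [cons_append, isLargeList_cons, KSstep_append γ hδ x]
      exact ih hp hps.of_cons

theorem of_append_left {l : List ℕ} (h : IsLargeList (γ ++ δ) l) (hl : l.Pairwise (· ≤ ·)) :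
    IsLargeList γ l := by
  obtain ⟨p, s, rfl, -, hs⟩ := h.exists_append_of_append
  exact hs.mono (sublist_append_right p s) hl

theorem of_append_right {l : List ℕ} (h : IsLargeList (γ ++ δ) l) (hl : l.Pairwise (· ≤ ·)) :
    IsLargeList δ l := by
  obtain ⟨p, s, rfl, hp, -⟩ := h.exists_append_of_append
  exact hp.mono (sublist_append_left p s) hl

theorem replicate_of_le {k K n : ℕ} {l : List ℕ} (h : IsLargeList (replicate K n) l)
    (hkK : k ≤ K) (hl : l.Pairwise (· ≤ ·)) : IsLargeList (replicate k n) l := by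
  rw [← Nat.sub_add_cancel hkK, replicate_add] at h
  exact h.of_append_right hl

theorem singleton_succ_of_cons_replicate {m n y : ℕ} {t : List ℕ}
    (h : IsLargeList (replicate m n) (y :: t)) (hy : y < m) (ht : t.Pairwise (· ≤ ·)) :
    IsLargeList [n + 1] (y :: t) := by
  obtain ⟨m, rfl⟩ := Nat.exists_eq_add_of_lt hy
  rw [isLargeList_cons, show y + m + 1 = (y + m) + 1 from rfl, KSstep_replicate_succ] at h
  exact (h.of_append_left ht).replicate_of_le (Nat.le_add_right y m) ht

theorem isLarge_of_subset {l : List ℕ} {Y : Finset ℕ} (h : IsLargeList α l)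
    (hl : l.Pairwise (· < ·)) (hlY : ∀ x ∈ l, x ∈ Y) : IsLarge α Y := by
  have hY : (Y.sort (· ≤ ·)).Pairwise (· < ·) := (Y.sortedLT_sort).pairwise
  refine h.mono (sublist_of_subperm_of_pairwise (subperm_of_subset hl.nodup ?_) hl hY)
    (Y.pairwise_sort _)
  exact fun x hx => (Finset.mem_sort _).mpr (hlY x hx)

end IsLargeList

def ExpSparseList (l : List ℕ) : Prop :=
  (∀ x ∈ l, 3 ≤ x) ∧ l.Pairwise fun x y => 4 ^ x < y

theorem ExpSparse.sort {X : Finset ℕ} (h : ExpSparse X) : ExpSparseList (X.sort (· ≤ ·)) :=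
  ⟨fun x hx => h.1 x ((Finset.mem_sort _).mp hx),
    (X.sortedLT_sort).pairwise.imp_of_mem fun hx hy hxy =>
      h.2 _ ((Finset.mem_sort _).mp hx) _ ((Finset.mem_sort _).mp hy) hxy⟩

namespace ExpSparseList

variable {l : List ℕ}

theorem pairwise_lt (h : ExpSparseList l) : l.Pairwise (· < ·) :=
  h.2.imp fun hxy => (Nat.lt_pow_self (by norm_num)).trans hxy

theorem pairwise_le (h : ExpSparseList l) : l.Pairwise (· ≤ ·) :=
  h.pairwise_lt.imp le_of_lt

theorem sublist {l' : List ℕ} (h : ExpSparseList l) (hl' : l' <+ l) : ExpSparseList l' :=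
  ⟨fun x hx => h.1 x (hl'.mem hx), h.2.sublist hl'⟩

end ExpSparseList

theorem lt_div_four_of_four_pow_lt {x y : ℕ} (hx : 3 ≤ x) (hxy : 4 ^ x < y) : x < y / 4 := by
  have h2 : 2 * (x - 1) < 2 ^ (2 * (x - 1)) := Nat.lt_two_pow_self
  have h4 : 4 ^ x = 4 * 2 ^ (2 * (x - 1)) := by
    rw [pow_mul, show 4 ^ x = 4 ^ (x - 1 + 1) by rw [Nat.sub_add_cancel (by omega)], pow_succ]
    ring
  rw [← Nat.succ_le_iff, Nat.le_div_iff_mul_le (by norm_num)]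
  omega

def HasLargeClass (c : ℕ → Bool) (α l : List ℕ) : Prop :=
  ∃ b, IsLargeList α (l.filter (c · == b))

section Colouring

variable (c : ℕ → Bool) {n : ℕ}

theorem hasLargeClass_zero {l : List ℕ} (hl : l ≠ []) : HasLargeClass c [0] l := by
  obtain ⟨x, t, rfl⟩ := exists_cons_of_ne_nil hl
  refine ⟨c x, ?_⟩
  rw [filter_cons_of_pos (by simp), isLargeList_cons]
  exact isLargeList_nil_left _

theorem exists_classes_replicate_of_pair
    (hpair : ∀ {l}, ExpSparseList l → IsLargeList [n, n] l → HasLargeClass c [n] l) (j : ℕ)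
    {l : List ℕ} (hl : ExpSparseList l) (h : IsLargeList (replicate (2 * j) n) l) :
    ∃ a b, a + b = j ∧ IsLargeList (replicate a n) (l.filter (c · == true)) ∧
      IsLargeList (replicate b n) (l.filter (c · == false)) := by
  induction j generalizing l with
  | zero => exact ⟨0, 0, rfl, isLargeList_nil_left _, isLargeList_nil_left _⟩
  | succ j ih =>
    rw [Nat.mul_succ, replicate_add] at h
    obtain ⟨p, s, rfl, hp, hs⟩ := h.exists_append_of_append
    obtain ⟨e, he⟩ := hpair (hl.sublist (sublist_append_left p s)) hp
    obtain ⟨a, b, rfl, ha, hb⟩ := ih (hl.sublist (sublist_append_right p s)) hs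
    have hsorted (d : Bool) : ((p ++ s).filter (c · == d)).Pairwise (· ≤ ·) :=
      hl.pairwise_le.filter _
    have hgain {i : ℕ} (hi : IsLargeList (replicate i n) (s.filter (c · == e))) :
        IsLargeList (replicate (i + 1) n) ((p ++ s).filter (c · == e)) := by
      rw [replicate_succ', filter_append]
      exact he.append hi (filter_append .. ▸ hsorted e)
    have hkeep {i : ℕ} {d : Bool} (hi : IsLargeList (replicate i n) (s.filter (c · == d))) :
        IsLargeList (replicate i n) ((p ++ s).filter (c · == d)) :=
      hi.mono ((sublist_append_right p s).filter _) (hsorted d)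
    cases e
    · exact ⟨a, b + 1, by omega, hkeep ha, hgain hb⟩
    · exact ⟨a + 1, b, by omega, hgain ha, hkeep hb⟩

theorem hasLargeClass_replicate_of_pair
    (hpair : ∀ {l}, ExpSparseList l → IsLargeList [n, n] l → HasLargeClass c [n] l) (k : ℕ)
    {l : List ℕ} (hl : ExpSparseList l) (h : IsLargeList (replicate (4 * k) n) l) :
    HasLargeClass c (replicate k n) l := by
  rw [show 4 * k = 2 * (2 * k) by ring] at h
  obtain ⟨a, b, hab, ha, hb⟩ := exists_classes_replicate_of_pair c hpair (2 * k) hl h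
  rcases le_total k a with hk | hk
  · exact ⟨true, ha.replicate_of_le hk (hl.pairwise_le.filter _)⟩
  · exact ⟨false, hb.replicate_of_le (by omega) (hl.pairwise_le.filter _)⟩

theorem hasLargeClass_pair_succ
    (ih : ∀ k {l}, ExpSparseList l → IsLargeList (replicate (4 * k) n) l →
      HasLargeClass c (replicate k n) l)
    {l : List ℕ} (hl : ExpSparseList l) (h : IsLargeList [n + 1, n + 1] l) :
    HasLargeClass c [n + 1] l := by
  obtain ⟨p, s, rfl, hp, hs⟩ :=
    IsLargeList.exists_append_of_append (γ := [n + 1]) (δ := [n + 1]) h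
  obtain ⟨x₀, p, rfl⟩ := exists_cons_of_ne_nil (hp.ne_nil (cons_ne_nil _ _))
  obtain ⟨x₁, s, rfl⟩ := exists_cons_of_ne_nil (hs.ne_nil (cons_ne_nil _ _))
  have hsorted := hl.pairwise_le
  have hbound : ∀ y ∈ x₀ :: p, y < x₁ / 4 := fun y hy =>
    lt_div_four_of_four_pow_lt (hl.1 y (mem_append_left _ hy))
      ((pairwise_append.mp hl.2).2.2 y hy x₁ mem_cons_self)
  have hps : ExpSparseList (p ++ s) :=
    hl.sublist ((sublist_cons_self x₀ p).append (sublist_cons_self x₁ s))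
  have hlarge : IsLargeList (replicate (4 * (x₁ / 4)) n) (p ++ s) := by
    rw [isLargeList_cons, KSstep_singleton_succ] at hp hs
    have hjoin := hp.append hs hps.pairwise_le
    rw [← replicate_add] at hjoin
    exact hjoin.replicate_of_le (by omega) hps.pairwise_le
  obtain ⟨d, hd⟩ := ih (x₁ / 4) hps hlarge
  rcases hfirst : (x₀ :: p).filter (c · == d) with _ | ⟨y, t⟩
  · -- `x₀ :: p` avoids the colour `d`, so it lies in the other class
    have hall : (x₀ :: p).filter (c · == !d) = x₀ :: p := by
      refine filter_eq_self.mpr fun y hy => ?_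
      have hne := filter_eq_nil_iff.mp hfirst y hy
      revert hne
      cases c y <;> cases d <;> decide
    refine ⟨!d, hp.mono ?_ (hsorted.filter _)⟩
    rw [filter_append, hall]
    exact sublist_append_left _ _
  · have hw : ((x₀ :: p) ++ s).filter (c · == d) = y :: (t ++ s.filter (c · == d)) := by
      rw [filter_append, hfirst, cons_append]
    have hwl : ((x₀ :: p) ++ s).filter (c · == d) <+ ((x₀ :: p) ++ x₁ :: s).filter (c · == d) :=
      ((sublist_cons_self x₁ s).append_left _).filter _
    have hwsorted := (hsorted.filter (c · == d)).sublist hwl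
    have hwd : IsLargeList (replicate (x₁ / 4) n) (((x₀ :: p) ++ s).filter (c · == d)) :=
      hd.mono (((sublist_cons_self x₀ p).append_right s).filter _) hwsorted
    rw [hw] at hwd hwsorted hwl
    have hy : y < x₁ / 4 := hbound y (mem_of_mem_filter (hfirst ▸ mem_cons_self))
    exact ⟨d, (hwd.singleton_succ_of_cons_replicate hy hwsorted.of_cons).mono hwl
      (hsorted.filter _)⟩

theorem hasLargeClass_replicate (n k : ℕ) {l : List ℕ} (hl : ExpSparseList l)
    (h : IsLargeList (replicate (4 * k) n) l) : HasLargeClass c (replicate k n) l := by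
  induction n generalizing k l with
  | zero =>
    exact hasLargeClass_replicate_of_pair c
      (fun _ hpair => hasLargeClass_zero c (hpair.ne_nil (cons_ne_nil _ _))) k hl h
  | succ n ih =>
    exact hasLargeClass_replicate_of_pair c
      (fun hl' hpair => hasLargeClass_pair_succ c ih hl' hpair) k hl h

end Colouring

/-- Let `n, k ∈ ℕ`. If `X = Y₀ ∪ Y₁ ⊆ ℕ` is a finite set which is `ω^n·(4k)`-large and
exp-sparse, then `Y₀` is `ω^n·k`-large or `Y₁` is `ω^n·k`-large. -/
theorem isLarge_of_union (n k : ℕ) (Y₀ Y₁ : Finset ℕ)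
    (hX : IsLarge (List.replicate (4 * k) n) (Y₀ ∪ Y₁)) (hs : ExpSparse (Y₀ ∪ Y₁)) :
    IsLarge (List.replicate k n) Y₀ ∨ IsLarge (List.replicate k n) Y₁ := by
  obtain ⟨b, hb⟩ := hasLargeClass_replicate (fun x => decide (x ∈ Y₀)) n k hs.sort hX
  have hsorted := hs.sort.pairwise_lt.filter (fun x => decide (x ∈ Y₀) == b)
  cases b
  · refine .inr (hb.isLarge_of_subset hsorted fun x hx => ?_)
    simp only [mem_filter, Finset.mem_sort, Finset.mem_union] at hx
    exact hx.1.resolve_left (by simpa using hx.2)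
  · refine .inl (hb.isLarge_of_subset hsorted fun x hx => ?_)
    simp only [mem_filter, Finset.mem_sort] at hx
    simpa using hx.2
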